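/- arXiv:2508.06140 — 5 statements merged into one kernel-verified Lean document; each statement's English description precedes it below -/
import Mathlib

section
/- Let A be an associative unital ℝ-algebra and let J : Fin D → Fin D → A and P : Fin D → A satisfy the iso(p,q) relations: J m n = −J n m, ⁅J m n, J k l⁆ = η n k • J m l + η m l • J n k − η n l • J m k − η m k • J n l, ⁅P m, P n⁆ = 0, and ⁅J m n, P k⁆ = η n k • P m − η m k • P n. Define C₄ := ((−1)^p/4) • Σ_{σ ∈ Equiv.Perm (Fin 3)} sign(σ) • Σ_{m : Fin 3 → Fin D} (ε (m 0) * ε (m 1) * ε (m 2)) • (J (m (σ 0)) (m (σ 1)) * P (m (σ 2))) * (J (m 0) (m 1) * P (m 2)). Then C₄ = (−1)^(p+1) • ( Σ_n ε n • Π n * Π n + (1/2) • J₍₂₎ * (Σ_m ε m • P m * P m) ), where Π n := Σ_m ε m • P m * J m n. -/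
noncomputable section

/-- The flat `so(p,q)` metric sign factor. -/
def eps (p : ℕ) {D : ℕ} (m : Fin D) : ℝ := if (m : ℕ) < p then -1 else 1

/-- The flat `so(p,q)` metric. -/
def eta (p : ℕ) {D : ℕ} (m n : Fin D) : ℝ := if m = n then eps p m else 0

open Finset

lemma eps_mul_self (p : ℕ) {D : ℕ} (m : Fin D) : eps p m * eps p m = 1 := by
  unfold eps; split_ifs <;> norm_num

lemma eta_diag (p : ℕ) {D : ℕ} (m : Fin D) : eta p m m = eps p m := by simp [eta]

lemma eta_off (p : ℕ) {D : ℕ} {m n : Fin D} (h : m ≠ n) : eta p m n = 0 := by simp [eta, h]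

lemma smul_cancel {A : Type*} [AddCommGroup A] [Module ℝ A] {x : A} (h : x = -x) : x = 0 := by
  have h2 : (2:ℝ) • x = 0 := by rw [two_smul]; nth_rewrite 1 [h]; abel
  have h3 := congrArg (fun y => ((2:ℝ)⁻¹) • y) h2
  simp only [smul_smul, smul_zero] at h3
  norm_num at h3
  exact h3

lemma sum2_antisym {A : Type*} [AddCommGroup A] [Module ℝ A] {D : ℕ}
    (f : Fin D → Fin D → A) (h : ∀ a b, f a b = - f b a) :
    ∑ a, ∑ b, f a b = 0 := by
  apply smul_cancel
  calc (∑ a, ∑ b, f a b) = ∑ b, ∑ a, f a b := Finset.sum_comm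
    _ = ∑ b, ∑ a, -(f b a) :=
        Finset.sum_congr rfl fun b _ => Finset.sum_congr rfl fun a _ => h a b
    _ = - ∑ b, ∑ a, f b a := by simp
    _ = - ∑ a, ∑ b, f a b := by rw [Finset.sum_comm]

lemma sum3_congr {M : Type*} [AddCommMonoid M] {D : ℕ}
    {F G : Fin D → Fin D → Fin D → M} (h : ∀ a b c, F a b c = G a b c) :
    (∑ a, ∑ b, ∑ c, F a b c) = ∑ a, ∑ b, ∑ c, G a b c :=
  Finset.sum_congr rfl fun a _ => Finset.sum_congr rfl fun b _ =>
    Finset.sum_congr rfl fun c _ => h a b c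

lemma sum3_rot {M : Type*} [AddCommMonoid M] {D : ℕ}
    (F : Fin D → Fin D → Fin D → M) :
    (∑ a, ∑ b, ∑ c, F a b c) = ∑ b, ∑ c, ∑ a, F a b c := by
  rw [Finset.sum_comm]
  exact Finset.sum_congr rfl fun b _ => Finset.sum_comm

lemma sum_fn3 {M : Type*} [AddCommMonoid M] {D : ℕ} (F : Fin D → Fin D → Fin D → M) :
    ∑ m : Fin 3 → Fin D, F (m 0) (m 1) (m 2) = ∑ a, ∑ b, ∑ c, F a b c := by
  let e : Fin D × Fin D × Fin D ≃ (Fin 3 → Fin D) :=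
    { toFun := fun x => ![x.1, x.2.1, x.2.2]
      invFun := fun m => (m 0, m 1, m 2)
      left_inv := by intro x; rfl
      right_inv := by intro m; funext i; fin_cases i <;> rfl }
  rw [← Fintype.sum_equiv e (fun x => F (x.1) (x.2.1) (x.2.2))
      (fun m => F (m 0) (m 1) (m 2)) (fun x => rfl)]
  simp [Fintype.sum_prod_type]

lemma collapse (p : ℕ) {A : Type*} [AddCommMonoid A] [Module ℝ A] {D : ℕ}
    (n : Fin D) (r : ℝ) (g : Fin D → A) :
    ∑ c, ((r * eps p c) * eta p n c) • g c = r • g n := by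
  rw [Finset.sum_eq_single n]
  · rw [eta_diag, mul_assoc, eps_mul_self, mul_one]
  · intro c _ hc
    rw [eta_off p (Ne.symm hc), mul_zero, zero_smul]
  · simp

section Aux

variable {D p : ℕ} {A : Type*} [Ring A] [Algebra ℝ A]
  (J : Fin D → Fin D → A) (P : Fin D → A)

lemma aux_PPJ0
    (hanti : ∀ m n, J m n = - J n m)
    (hPc : ∀ m n, P m * P n = P n * P m) :
    (∑ a : Fin D, ∑ b : Fin D, (eps p a * eps p b) • (P a * (P b * J a b))) = 0 := by
  apply sum2_antisym
  intro a b
  rw [hanti b a]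
  have h : P b * (P a * -J a b) = -(P a * (P b * J a b)) := by
    simp only [mul_neg]
    rw [← mul_assoc, hPc b a, mul_assoc]
  rw [h, smul_neg, neg_neg, mul_comm (eps p b) (eps p a)]

lemma aux_PnJ0
    (hanti : ∀ m n, J m n = - J n m)
    (hPc : ∀ m n, P m * P n = P n * P m) :
    (∑ n : Fin D, ∑ a : Fin D, (eps p n * eps p a) • (P a * (P n * J a n))) = 0 := by
  apply sum2_antisym
  intro n a
  rw [hanti n a]
  have h : P n * (P a * -J a n) = -(P a * (P n * J a n)) := by
    simp only [mul_neg]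
    rw [← mul_assoc, hPc n a, mul_assoc]
  rw [h, smul_neg, neg_neg, mul_comm (eps p a) (eps p n)]

lemma aux_S1
    (hanti : ∀ m n, J m n = - J n m)
    (hPc : ∀ m n, P m * P n = P n * P m)
    (hPJ : ∀ m n k, P k * J m n = J m n * P k - (eta p n k • P m - eta p m k • P n)) :
    (∑ a : Fin D, ∑ b : Fin D, ∑ c : Fin D, (eps p a * eps p b * eps p c) •
        ((J a b * P c) * (J a b * P c)))
      = -((∑ a : Fin D, ∑ b : Fin D, (eps p a * eps p b) • (J a b * J b a)) *
          (∑ c : Fin D, eps p c • (P c * P c))) := by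
  have step1 : ∀ a b c : Fin D, (eps p a * eps p b * eps p c) • ((J a b * P c) * (J a b * P c))
      = (eps p a * eps p b * eps p c) • (J a b * (J a b * (P c * P c)))
        - (((eps p a * eps p b) * eps p c) * eta p b c) • (J a b * (P a * P c))
        + (((eps p a * eps p b) * eps p c) * eta p a c) • (J a b * (P b * P c)) := by
    intro a b c
    have h : (J a b * P c) * (J a b * P c) = J a b * ((P c * J a b) * P c) := by noncomm_ring
    rw [h, hPJ a b c]
    simp only [mul_sub, sub_mul, mul_add, add_mul, smul_sub, smul_add, smul_smul,
      mul_smul_comm, smul_mul_assoc, mul_assoc]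
    module
  rw [sum3_congr step1]
  simp only [Finset.sum_add_distrib, Finset.sum_sub_distrib]
  have hY : (∑ a : Fin D, ∑ b : Fin D, ∑ c : Fin D,
        (((eps p a * eps p b) * eps p c) * eta p b c) • (J a b * (P a * P c)))
      = ∑ a : Fin D, ∑ b : Fin D, (eps p a * eps p b) • (J a b * (P a * P b)) :=
    Finset.sum_congr rfl fun a _ => Finset.sum_congr rfl fun b _ =>
      collapse p b (eps p a * eps p b) (fun c => J a b * (P a * P c))
  have hZ : (∑ a : Fin D, ∑ b : Fin D, ∑ c : Fin D,
        (((eps p a * eps p b) * eps p c) * eta p a c) • (J a b * (P b * P c)))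
      = ∑ a : Fin D, ∑ b : Fin D, (eps p a * eps p b) • (J a b * (P b * P a)) :=
    Finset.sum_congr rfl fun a _ => Finset.sum_congr rfl fun b _ =>
      collapse p a (eps p a * eps p b) (fun c => J a b * (P b * P c))
  rw [hY, hZ]
  have hZY : (∑ a : Fin D, ∑ b : Fin D, (eps p a * eps p b) • (J a b * (P b * P a)))
      = ∑ a : Fin D, ∑ b : Fin D, (eps p a * eps p b) • (J a b * (P a * P b)) :=
    Finset.sum_congr rfl fun a _ => Finset.sum_congr rfl fun b _ => by rw [hPc b a]
  rw [hZY]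
  have hX : (∑ a : Fin D, ∑ b : Fin D, ∑ c : Fin D,
        (eps p a * eps p b * eps p c) • (J a b * (J a b * (P c * P c))))
      = -((∑ a : Fin D, ∑ b : Fin D, (eps p a * eps p b) • (J a b * J b a)) *
          (∑ c : Fin D, eps p c • (P c * P c))) := by
    have key : ∀ a b : Fin D,
        (∑ c : Fin D, (eps p a * eps p b * eps p c) • (J a b * (J a b * (P c * P c))))
        = -((eps p a * eps p b) • (J a b * J b a) * (∑ c : Fin D, eps p c • (P c * P c))) := by
      intro a b
      rw [smul_mul_assoc, Finset.mul_sum, Finset.smul_sum, ← Finset.sum_neg_distrib]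
      refine Finset.sum_congr rfl fun c _ => ?_
      rw [hanti b a]
      simp only [mul_neg, neg_mul, neg_neg, mul_smul_comm, smul_smul, smul_neg, mul_assoc]
      try module
    calc (∑ a : Fin D, ∑ b : Fin D, ∑ c : Fin D,
          (eps p a * eps p b * eps p c) • (J a b * (J a b * (P c * P c))))
        = ∑ a : Fin D, ∑ b : Fin D,
            -((eps p a * eps p b) • (J a b * J b a) * (∑ c : Fin D, eps p c • (P c * P c))) :=
          Finset.sum_congr rfl fun a _ => Finset.sum_congr rfl fun b _ => key a b
      _ = -((∑ a : Fin D, ∑ b : Fin D, (eps p a * eps p b) • (J a b * J b a)) *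
            (∑ c : Fin D, eps p c • (P c * P c))) := by
          simp only [Finset.sum_neg_distrib, ← Finset.sum_mul]
  rw [hX]
  abel

lemma aux_Q
    (hJ0 : ∀ m, J m m = 0)
    (hanti : ∀ m n, J m n = - J n m)
    (hPc : ∀ m n, P m * P n = P n * P m)
    (hJPs : ∀ m n k, J m n * P k = P k * J m n + (eta p n k • P m - eta p m k • P n)) :
    (∑ n : Fin D, eps p n • ((∑ m : Fin D, eps p m • (P m * J m n)) *
        (∑ m : Fin D, eps p m • (P m * J m n))))
    = ∑ n : Fin D, ∑ a : Fin D, ∑ b : Fin D,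
        (eps p n * eps p a * eps p b) • (P a * (P b * (J a n * J b n))) := by
  have e0 : (∑ n : Fin D, eps p n • ((∑ m : Fin D, eps p m • (P m * J m n)) *
        (∑ m : Fin D, eps p m • (P m * J m n))))
      = ∑ n : Fin D, ∑ a : Fin D, ∑ b : Fin D,
          (eps p n * eps p a * eps p b) • (P a * (J a n * (P b * J b n))) := by
    refine Finset.sum_congr rfl fun n _ => ?_
    rw [Finset.sum_mul, Finset.smul_sum]
    refine Finset.sum_congr rfl fun a _ => ?_
    rw [Finset.mul_sum, Finset.smul_sum]
    refine Finset.sum_congr rfl fun b _ => ?_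
    simp only [smul_mul_assoc, mul_smul_comm, smul_smul, mul_assoc]
    module
  rw [e0]
  have step1 : ∀ n a b : Fin D,
      (eps p n * eps p a * eps p b) • (P a * (J a n * (P b * J b n)))
      = (eps p n * eps p a * eps p b) • (P a * (P b * (J a n * J b n)))
        + (((eps p n * eps p a) * eps p b) * eta p n b) • (P a * (P a * J b n))
        - (((eps p n * eps p a) * eps p b) * eta p a b) • (P a * (P n * J b n)) := by
    intro n a b
    rw [show P a * (J a n * (P b * J b n)) = P a * ((J a n * P b) * J b n) from by noncomm_ring,
      hJPs a n b]
    simp only [mul_sub, sub_mul, mul_add, add_mul, smul_sub, smul_add, smul_smul,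
      mul_smul_comm, smul_mul_assoc, mul_assoc]
    module
  rw [sum3_congr step1]
  simp only [Finset.sum_add_distrib, Finset.sum_sub_distrib]
  have hQe1 : (∑ n : Fin D, ∑ a : Fin D, ∑ b : Fin D,
      (((eps p n * eps p a) * eps p b) * eta p n b) • (P a * (P a * J b n))) = 0 := by
    refine Finset.sum_eq_zero fun n _ => Finset.sum_eq_zero fun a _ => ?_
    rw [collapse p n (eps p n * eps p a) (fun b => P a * (P a * J b n)), hJ0 n]
    simp
  have hQe2 : (∑ n : Fin D, ∑ a : Fin D, ∑ b : Fin D,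
      (((eps p n * eps p a) * eps p b) * eta p a b) • (P a * (P n * J b n)))
      = ∑ n : Fin D, ∑ a : Fin D, (eps p n * eps p a) • (P a * (P n * J a n)) :=
    Finset.sum_congr rfl fun n _ => Finset.sum_congr rfl fun a _ =>
      collapse p a (eps p n * eps p a) (fun b => P a * (P n * J b n))
  rw [hQe1, hQe2, aux_PnJ0 J P hanti hPc]
  abel

lemma aux_S3
    (hanti : ∀ m n, J m n = - J n m) :
    (∑ a : Fin D, ∑ b : Fin D, ∑ c : Fin D, (eps p a * eps p b * eps p c) •
        ((J a c * P b) * (J a b * P c)))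
    = -(∑ a : Fin D, ∑ b : Fin D, ∑ c : Fin D, (eps p a * eps p b * eps p c) •
        ((J b c * P a) * (J a b * P c))) := by
  rw [Finset.sum_comm]
  calc (∑ b : Fin D, ∑ a : Fin D, ∑ c : Fin D, (eps p a * eps p b * eps p c) •
          ((J a c * P b) * (J a b * P c)))
      = ∑ b : Fin D, ∑ a : Fin D, ∑ c : Fin D, -((eps p b * eps p a * eps p c) •
          ((J a c * P b) * (J b a * P c))) := by
        refine sum3_congr fun b a c => ?_
        rw [hanti b a]
        simp only [mul_neg, neg_mul, smul_neg, neg_neg]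
        module
    _ = -(∑ b : Fin D, ∑ a : Fin D, ∑ c : Fin D, (eps p b * eps p a * eps p c) •
          ((J a c * P b) * (J b a * P c))) := by simp only [Finset.sum_neg_distrib]

lemma aux_S2
    (hJ0 : ∀ m, J m m = 0)
    (hanti : ∀ m n, J m n = - J n m)
    (hPc : ∀ m n, P m * P n = P n * P m)
    (hJPs : ∀ m n k, J m n * P k = P k * J m n + (eta p n k • P m - eta p m k • P n))
    (hJJs : ∀ a b n, J b n * J a n = J a n * J b n -
      (eta p n b • J a n + eta p a n • J n b - eta p n n • J a b - eta p a b • J n n)) :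
    (∑ a : Fin D, ∑ b : Fin D, ∑ c : Fin D, (eps p a * eps p b * eps p c) •
        ((J b c * P a) * (J a b * P c)))
    = -(∑ n : Fin D, ∑ a : Fin D, ∑ b : Fin D,
        (eps p n * eps p a * eps p b) • (P a * (P b * (J a n * J b n)))) := by
  have step1 : ∀ a b c : Fin D, (eps p a * eps p b * eps p c) •
        ((J b c * P a) * (J a b * P c))
      = (eps p a * eps p b * eps p c) • (P a * (J b c * (J a b * P c)))
        + (((eps p b * eps p c) * eps p a) * eta p c a) • (P b * (J a b * P c))
        - (((eps p b * eps p c) * eps p a) * eta p b a) • (P c * (J a b * P c)) := by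
    intro a b c
    rw [hJPs b c a]
    simp only [mul_sub, sub_mul, mul_add, add_mul, smul_sub, smul_add, smul_smul,
      mul_smul_comm, smul_mul_assoc, mul_assoc]
    module
  rw [sum3_congr step1]
  simp only [Finset.sum_add_distrib, Finset.sum_sub_distrib]
  have hT3 : (∑ a : Fin D, ∑ b : Fin D, ∑ c : Fin D,
      (((eps p b * eps p c) * eps p a) * eta p b a) • (P c * (J a b * P c))) = 0 := by
    rw [sum3_rot (fun a b c => (((eps p b * eps p c) * eps p a) * eta p b a) •
      (P c * (J a b * P c)))]
    refine Finset.sum_eq_zero fun b _ => Finset.sum_eq_zero fun c _ => ?_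
    rw [collapse p b (eps p b * eps p c) (fun a => P c * (J a b * P c)), hJ0 b]
    simp
  have hT2 : (∑ a : Fin D, ∑ b : Fin D, ∑ c : Fin D,
      (((eps p b * eps p c) * eps p a) * eta p c a) • (P b * (J a b * P c)))
      = ∑ a : Fin D, ∑ b : Fin D, (eps p a * eps p b) • (P a * (J b a * P b)) := by
    rw [sum3_rot (fun a b c => (((eps p b * eps p c) * eps p a) * eta p c a) •
      (P b * (J a b * P c)))]
    exact Finset.sum_congr rfl fun b _ => Finset.sum_congr rfl fun c _ =>
      collapse p c (eps p b * eps p c) (fun a => P b * (J a b * P c))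
  rw [hT3, hT2]
  have step2 : ∀ a b c : Fin D,
      (eps p a * eps p b * eps p c) • (P a * (J b c * (J a b * P c)))
      = (eps p a * eps p b * eps p c) • (P a * (J b c * (P c * J a b)))
        + (((eps p a * eps p b) * eps p c) * eta p b c) • (P a * (J b c * P a))
        - (((eps p a * eps p b) * eps p c) * eta p a c) • (P a * (J b c * P b)) := by
    intro a b c
    rw [hJPs a b c]
    simp only [mul_sub, sub_mul, mul_add, add_mul, smul_sub, smul_add, smul_smul,
      mul_smul_comm, smul_mul_assoc, mul_assoc]
    module
  rw [sum3_congr step2]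
  simp only [Finset.sum_add_distrib, Finset.sum_sub_distrib]
  have hT12 : (∑ a : Fin D, ∑ b : Fin D, ∑ c : Fin D,
      (((eps p a * eps p b) * eps p c) * eta p b c) • (P a * (J b c * P a))) = 0 := by
    refine Finset.sum_eq_zero fun a _ => Finset.sum_eq_zero fun b _ => ?_
    rw [collapse p b (eps p a * eps p b) (fun c => P a * (J b c * P a)), hJ0 b]
    simp
  have hT13 : (∑ a : Fin D, ∑ b : Fin D, ∑ c : Fin D,
      (((eps p a * eps p b) * eps p c) * eta p a c) • (P a * (J b c * P b)))
      = ∑ a : Fin D, ∑ b : Fin D, (eps p a * eps p b) • (P a * (J b a * P b)) :=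
    Finset.sum_congr rfl fun a _ => Finset.sum_congr rfl fun b _ =>
      collapse p a (eps p a * eps p b) (fun c => P a * (J b c * P b))
  rw [hT12, hT13]
  have step3 : ∀ a b c : Fin D,
      (eps p a * eps p b * eps p c) • (P a * (J b c * (P c * J a b)))
      = (eps p a * eps p b * eps p c) • (P a * (P c * (J b c * J a b)))
        + ((eps p a * eps p b * eps p c) * eta p c c) • (P a * (P b * J a b))
        - (((eps p a * eps p b) * eps p c) * eta p b c) • (P a * (P c * J a b)) := by
    intro a b c
    rw [show P a * (J b c * (P c * J a b)) = P a * ((J b c * P c) * J a b) from by noncomm_ring,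
      hJPs b c c]
    simp only [mul_sub, sub_mul, mul_add, add_mul, smul_sub, smul_add, smul_smul,
      mul_smul_comm, smul_mul_assoc, mul_assoc]
    module
  rw [sum3_congr step3]
  simp only [Finset.sum_add_distrib, Finset.sum_sub_distrib]
  have hX1 : (∑ a : Fin D, ∑ b : Fin D, ∑ c : Fin D,
      ((eps p a * eps p b * eps p c) * eta p c c) • (P a * (P b * J a b))) = 0 := by
    have e1 : (∑ a : Fin D, ∑ b : Fin D, ∑ c : Fin D,
        ((eps p a * eps p b * eps p c) * eta p c c) • (P a * (P b * J a b)))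
        = ∑ a : Fin D, ∑ b : Fin D, ∑ c : Fin D,
          (eps p a * eps p b) • (P a * (P b * J a b)) :=
      sum3_congr fun a b c => by rw [eta_diag, mul_assoc, eps_mul_self, mul_one]
    rw [e1, sum3_rot (fun a b c => (eps p a * eps p b) • (P a * (P b * J a b))),
      sum3_rot (fun b c a => (eps p a * eps p b) • (P a * (P b * J a b)))]
    exact Finset.sum_eq_zero fun c _ => aux_PPJ0 J P hanti hPc
  have hX2 : (∑ a : Fin D, ∑ b : Fin D, ∑ c : Fin D,
      (((eps p a * eps p b) * eps p c) * eta p b c) • (P a * (P c * J a b))) = 0 := by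
    have e1 : (∑ a : Fin D, ∑ b : Fin D, ∑ c : Fin D,
        (((eps p a * eps p b) * eps p c) * eta p b c) • (P a * (P c * J a b)))
        = ∑ a : Fin D, ∑ b : Fin D, (eps p a * eps p b) • (P a * (P b * J a b)) :=
      Finset.sum_congr rfl fun a _ => Finset.sum_congr rfl fun b _ =>
        collapse p b (eps p a * eps p b) (fun c => P a * (P c * J a b))
    rw [e1]
    exact aux_PPJ0 J P hanti hPc
  rw [hX1, hX2]
  have hW : (∑ a : Fin D, ∑ b : Fin D, ∑ c : Fin D,
      (eps p a * eps p b * eps p c) • (P a * (P c * (J b c * J a b))))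
      = -(∑ n : Fin D, ∑ a : Fin D, ∑ b : Fin D,
        (eps p n * eps p a * eps p b) • (P a * (P b * (J a n * J b n)))) := by
    rw [Finset.sum_comm]
    have step4 : ∀ n a b : Fin D,
        (eps p a * eps p n * eps p b) • (P a * (P b * (J n b * J a n)))
        = -((eps p n * eps p a * eps p b) • (P a * (P b * (J a n * J b n))))
          + (((eps p n * eps p a) * eps p b) * eta p n b) • (P a * (P b * J a n))
          + (((eps p a * eps p b) * eps p n) * eta p a n) • (P a * (P b * J n b))
          - ((eps p a * eps p b * eps p n) * eta p n n) • (P a * (P b * J a b)) := by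
      intro n a b
      rw [show J n b * J a n = -(J b n * J a n) from by rw [hanti n b, neg_mul],
        hJJs a b n, hJ0 n]
      simp only [mul_sub, sub_mul, mul_add, add_mul, smul_sub, smul_add, smul_smul,
        mul_smul_comm, smul_mul_assoc, mul_neg, neg_mul, neg_neg, smul_neg, smul_zero,
        mul_zero, zero_mul, sub_zero, mul_assoc]
      module
    rw [sum3_congr step4]
    simp only [Finset.sum_add_distrib, Finset.sum_sub_distrib]
    have hE1 : (∑ n : Fin D, ∑ a : Fin D, ∑ b : Fin D,
        (((eps p n * eps p a) * eps p b) * eta p n b) • (P a * (P b * J a n)))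
        = ∑ n : Fin D, ∑ a : Fin D, (eps p n * eps p a) • (P a * (P n * J a n)) :=
      Finset.sum_congr rfl fun n _ => Finset.sum_congr rfl fun a _ =>
        collapse p n (eps p n * eps p a) (fun b => P a * (P b * J a n))
    have hE2 : (∑ n : Fin D, ∑ a : Fin D, ∑ b : Fin D,
        (((eps p a * eps p b) * eps p n) * eta p a n) • (P a * (P b * J n b))) = 0 := by
      rw [sum3_rot (fun n a b => (((eps p a * eps p b) * eps p n) * eta p a n) •
        (P a * (P b * J n b)))]
      have e1 : (∑ a : Fin D, ∑ b : Fin D, ∑ n : Fin D,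
          (((eps p a * eps p b) * eps p n) * eta p a n) • (P a * (P b * J n b)))
          = ∑ a : Fin D, ∑ b : Fin D, (eps p a * eps p b) • (P a * (P b * J a b)) :=
        Finset.sum_congr rfl fun a _ => Finset.sum_congr rfl fun b _ =>
          collapse p a (eps p a * eps p b) (fun n => P a * (P b * J n b))
      rw [e1]
      exact aux_PPJ0 J P hanti hPc
    have hE3 : (∑ n : Fin D, ∑ a : Fin D, ∑ b : Fin D,
        ((eps p a * eps p b * eps p n) * eta p n n) • (P a * (P b * J a b))) = 0 := by
      have e1 : (∑ n : Fin D, ∑ a : Fin D, ∑ b : Fin D,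
          ((eps p a * eps p b * eps p n) * eta p n n) • (P a * (P b * J a b)))
          = ∑ n : Fin D, ∑ a : Fin D, ∑ b : Fin D,
            (eps p a * eps p b) • (P a * (P b * J a b)) :=
        sum3_congr fun n a b => by rw [eta_diag, mul_assoc, eps_mul_self, mul_one]
      rw [e1]
      exact Finset.sum_eq_zero fun n _ => aux_PPJ0 J P hanti hPc
    rw [hE1, aux_PnJ0 J P hanti hPc, hE2, hE3]
    simp only [Finset.sum_neg_distrib]
    abel
  rw [hW]
  abel

end Aux

theorem stmt_3 (p q : ℕ) (A : Type*) [Ring A] [Algebra ℝ A]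
    (J : Fin (p + q) → Fin (p + q) → A) (P : Fin (p + q) → A)
    (hanti : ∀ m n, J m n = - J n m)
    (hso : ∀ m n k l, ⁅J m n, J k l⁆ =
      eta p n k • J m l + eta p m l • J n k - eta p n l • J m k - eta p m k • J n l)
    (hPP : ∀ m n, ⁅P m, P n⁆ = 0)
    (hJP : ∀ m n k, ⁅J m n, P k⁆ = eta p n k • P m - eta p m k • P n) :
    let D := p + q
    let Pie : Fin D → A := fun n => ∑ m : Fin D, eps p m • (P m * J m n)
    let J2 : A := ∑ m : Fin D, ∑ n : Fin D, (eps p m * eps p n) • (J m n * J n m)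
    (((-1 : ℝ) ^ p / 4) •
      ∑ σ : Equiv.Perm (Fin 3), (((Equiv.Perm.sign σ : ℤ) : ℝ)) •
        ∑ m : Fin 3 → Fin D,
          (eps p (m 0) * eps p (m 1) * eps p (m 2)) •
          ((J (m (σ 0)) (m (σ 1)) * P (m (σ 2))) * (J (m 0) (m 1) * P (m 2)))) =
    ((-1 : ℝ) ^ (p + 1)) •
      ((∑ n : Fin D, eps p n • (Pie n * Pie n)) +
        (1 / 2 : ℝ) • (J2 * ∑ m : Fin D, eps p m • (P m * P m))) := by
  intro D Pie J2
  rw [show J2 = ∑ m : Fin D, ∑ n : Fin D, (eps p m * eps p n) • (J m n * J n m) from rfl]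
  simp only [show Pie = fun n => ∑ m : Fin D, eps p m • (P m * J m n) from rfl]
  have hJ0 : ∀ m, J m m = 0 := fun m => smul_cancel (hanti m m)
  have hPc : ∀ m n, P m * P n = P n * P m := by
    intro m n; have h := hPP m n; rw [Ring.lie_def, sub_eq_zero] at h; exact h
  have hJPs : ∀ m n k, J m n * P k = P k * J m n + (eta p n k • P m - eta p m k • P n) := by
    intro m n k; have h := hJP m n k; rw [Ring.lie_def] at h; rw [← h]; abel
  have hPJ : ∀ m n k, P k * J m n = J m n * P k - (eta p n k • P m - eta p m k • P n) := by
    intro m n k; have h := hJP m n k; rw [Ring.lie_def] at h; rw [← h]; abel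
  have hJJs : ∀ a b n, J b n * J a n = J a n * J b n -
      (eta p n b • J a n + eta p a n • J n b - eta p n n • J a b - eta p a b • J n n) := by
    intro a b n; have h := hso a n b n; rw [Ring.lie_def] at h; rw [← h]; abel
  -- expand permutation sum
  have huniv : (Finset.univ : Finset (Equiv.Perm (Fin 3))) =
      {1, Equiv.swap 0 1, Equiv.swap 0 2, Equiv.swap 1 2,
       Equiv.swap 0 1 * Equiv.swap 1 2, Equiv.swap 1 2 * Equiv.swap 0 1} := by decide
  rw [huniv, Finset.sum_insert (by decide), Finset.sum_insert (by decide),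
    Finset.sum_insert (by decide), Finset.sum_insert (by decide),
    Finset.sum_insert (by decide), Finset.sum_singleton]
  have sg1 : (((Equiv.Perm.sign (1 : Equiv.Perm (Fin 3)) : ℤ)) : ℝ) = 1 := by
    have h : Equiv.Perm.sign (1 : Equiv.Perm (Fin 3)) = 1 := by decide
    rw [h]; simp
  have sg01 : (((Equiv.Perm.sign (Equiv.swap (0:Fin 3) 1) : ℤ)) : ℝ) = -1 := by
    have h : Equiv.Perm.sign (Equiv.swap (0:Fin 3) 1) = -1 := by decide
    rw [h]; simp
  have sg02 : (((Equiv.Perm.sign (Equiv.swap (0:Fin 3) 2) : ℤ)) : ℝ) = -1 := by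
    have h : Equiv.Perm.sign (Equiv.swap (0:Fin 3) 2) = -1 := by decide
    rw [h]; simp
  have sg12 : (((Equiv.Perm.sign (Equiv.swap (1:Fin 3) 2) : ℤ)) : ℝ) = -1 := by
    have h : Equiv.Perm.sign (Equiv.swap (1:Fin 3) 2) = -1 := by decide
    rw [h]; simp
  have sgc : (((Equiv.Perm.sign (Equiv.swap (0:Fin 3) 1 * Equiv.swap 1 2) : ℤ)) : ℝ) = 1 := by
    have h : Equiv.Perm.sign (Equiv.swap (0:Fin 3) 1 * Equiv.swap 1 2) = 1 := by decide
    rw [h]; simp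
  have sgc' : (((Equiv.Perm.sign (Equiv.swap (1:Fin 3) 2 * Equiv.swap 0 1) : ℤ)) : ℝ) = 1 := by
    have h : Equiv.Perm.sign (Equiv.swap (1:Fin 3) 2 * Equiv.swap 0 1) = 1 := by decide
    rw [h]; simp
  rw [sg1, sg01, sg02, sg12, sgc, sgc']
  have e1 : ∀ x : Fin 3, (1 : Equiv.Perm (Fin 3)) x = x := fun x => rfl
  have a0 : (Equiv.swap (0:Fin 3) 1) 0 = 1 := by decide
  have a1 : (Equiv.swap (0:Fin 3) 1) 1 = 0 := by decide
  have a2 : (Equiv.swap (0:Fin 3) 1) 2 = 2 := by decide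
  have b0 : (Equiv.swap (0:Fin 3) 2) 0 = 2 := by decide
  have b1 : (Equiv.swap (0:Fin 3) 2) 1 = 1 := by decide
  have b2 : (Equiv.swap (0:Fin 3) 2) 2 = 0 := by decide
  have c0 : (Equiv.swap (1:Fin 3) 2) 0 = 0 := by decide
  have c1 : (Equiv.swap (1:Fin 3) 2) 1 = 2 := by decide
  have c2 : (Equiv.swap (1:Fin 3) 2) 2 = 1 := by decide
  have d0 : ((Equiv.swap (0:Fin 3) 1 * Equiv.swap 1 2 : Equiv.Perm (Fin 3)) : Fin 3 → Fin 3) 0 = 1 := by decide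
  have d1 : ((Equiv.swap (0:Fin 3) 1 * Equiv.swap 1 2 : Equiv.Perm (Fin 3)) : Fin 3 → Fin 3) 1 = 2 := by decide
  have d2 : ((Equiv.swap (0:Fin 3) 1 * Equiv.swap 1 2 : Equiv.Perm (Fin 3)) : Fin 3 → Fin 3) 2 = 0 := by decide
  have f0 : ((Equiv.swap (1:Fin 3) 2 * Equiv.swap 0 1 : Equiv.Perm (Fin 3)) : Fin 3 → Fin 3) 0 = 2 := by decide
  have f1 : ((Equiv.swap (1:Fin 3) 2 * Equiv.swap 0 1 : Equiv.Perm (Fin 3)) : Fin 3 → Fin 3) 1 = 0 := by decide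
  have f2 : ((Equiv.swap (1:Fin 3) 2 * Equiv.swap 0 1 : Equiv.Perm (Fin 3)) : Fin 3 → Fin 3) 2 = 1 := by decide
  simp only [e1, a0, a1, a2, b0, b1, b2, c0, c1, c2, d0, d1, d2, f0, f1, f2]
  rw [sum_fn3 (fun a b c => (eps p a * eps p b * eps p c) • ((J a b * P c) * (J a b * P c))),
      sum_fn3 (fun a b c => (eps p a * eps p b * eps p c) • ((J b a * P c) * (J a b * P c))),
      sum_fn3 (fun a b c => (eps p a * eps p b * eps p c) • ((J c b * P a) * (J a b * P c))),
      sum_fn3 (fun a b c => (eps p a * eps p b * eps p c) • ((J a c * P b) * (J a b * P c))),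
      sum_fn3 (fun a b c => (eps p a * eps p b * eps p c) • ((J b c * P a) * (J a b * P c))),
      sum_fn3 (fun a b c => (eps p a * eps p b * eps p c) • ((J c a * P b) * (J a b * P c)))]
  -- identify the six triple sums
  have hB : (∑ a : Fin D, ∑ b : Fin D, ∑ c : Fin D, (eps p a * eps p b * eps p c) •
        ((J b a * P c) * (J a b * P c)))
      = -(∑ a : Fin D, ∑ b : Fin D, ∑ c : Fin D, (eps p a * eps p b * eps p c) •
        ((J a b * P c) * (J a b * P c))) := by
    rw [← Finset.sum_neg_distrib]
    refine Finset.sum_congr rfl fun a _ => ?_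
    rw [← Finset.sum_neg_distrib]
    refine Finset.sum_congr rfl fun b _ => ?_
    rw [← Finset.sum_neg_distrib]
    refine Finset.sum_congr rfl fun c _ => ?_
    rw [hanti b a]
    simp only [neg_mul, smul_neg]
  have hC : (∑ a : Fin D, ∑ b : Fin D, ∑ c : Fin D, (eps p a * eps p b * eps p c) •
        ((J c b * P a) * (J a b * P c)))
      = -(∑ a : Fin D, ∑ b : Fin D, ∑ c : Fin D, (eps p a * eps p b * eps p c) •
        ((J b c * P a) * (J a b * P c))) := by
    rw [← Finset.sum_neg_distrib]
    refine Finset.sum_congr rfl fun a _ => ?_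
    rw [← Finset.sum_neg_distrib]
    refine Finset.sum_congr rfl fun b _ => ?_
    rw [← Finset.sum_neg_distrib]
    refine Finset.sum_congr rfl fun c _ => ?_
    rw [hanti c b]
    simp only [neg_mul, smul_neg]
  have hD : (∑ a : Fin D, ∑ b : Fin D, ∑ c : Fin D, (eps p a * eps p b * eps p c) •
        ((J a c * P b) * (J a b * P c)))
      = -(∑ a : Fin D, ∑ b : Fin D, ∑ c : Fin D, (eps p a * eps p b * eps p c) •
        ((J b c * P a) * (J a b * P c))) := aux_S3 J P hanti
  have hF : (∑ a : Fin D, ∑ b : Fin D, ∑ c : Fin D, (eps p a * eps p b * eps p c) •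
        ((J c a * P b) * (J a b * P c)))
      = ∑ a : Fin D, ∑ b : Fin D, ∑ c : Fin D, (eps p a * eps p b * eps p c) •
        ((J b c * P a) * (J a b * P c)) := by
    have h1 : (∑ a : Fin D, ∑ b : Fin D, ∑ c : Fin D, (eps p a * eps p b * eps p c) •
          ((J c a * P b) * (J a b * P c)))
        = -(∑ a : Fin D, ∑ b : Fin D, ∑ c : Fin D, (eps p a * eps p b * eps p c) •
          ((J a c * P b) * (J a b * P c))) := by
      rw [← Finset.sum_neg_distrib]
      refine Finset.sum_congr rfl fun a _ => ?_
      rw [← Finset.sum_neg_distrib]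
      refine Finset.sum_congr rfl fun b _ => ?_
      rw [← Finset.sum_neg_distrib]
      refine Finset.sum_congr rfl fun c _ => ?_
      rw [hanti c a]
      simp only [neg_mul, smul_neg]
    rw [h1, hD, neg_neg]
  rw [hB, hC, hD, hF]
  rw [aux_S1 J P hanti hPc hPJ, aux_S2 J P hJ0 hanti hPc hJPs hJJs,
    aux_Q J P hJ0 hanti hPc hJPs]
  rw [pow_succ]
  module
end
end

section
/- Fix a real R ≠ 0 and define G : (Fin D → ℝ) → ℝ by G x = 1 − (Σ_μ ε μ * (x μ)²)/(4R²). For a function f : (Fin D → ℝ) → ℝ define (e_n f)(x) := G x * ∂_n f x, where ∂_n f x is the partial derivative of f at x in the n-th coordinate direction. Then for every twice continuously differentiable f : (Fin D → ℝ) → ℝ, all n, m : Fin D and all x : Fin D → ℝ: e_n (e_m f) x − e_m (e_n f) x = −(1/(2R²)) * ( (ε n * x n) * (e_m f) x − (ε m * x m) * (e_n f) x ). (The anholonomy coefficients of the frame e_n = G ∂_n are ℰ_{nm}{}^l = −(1/(2R²))(x_n δ_m^l − x_m δ_n^l).) -/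
noncomputable section

/-! In `[G ∂_v, G ∂_w] f` the second derivatives of `f` cancel by symmetry of the Hessian,
leaving `G (∂_v G ∂_w f - ∂_w G ∂_v f)`; for the quadratic `G` of the theorem,
`∂_k G = -ε_k x_k / (2R²)`. -/

section ScaledFrame

variable {E : Type*} [NormedAddCommGroup E] [NormedSpace ℝ E] {G f : E → ℝ} {x : E}

theorem fderiv_mul_fderiv_apply (hG : DifferentiableAt ℝ G x)
    (hf : DifferentiableAt ℝ (fderiv ℝ f) x) (v w : E) :
    fderiv ℝ (fun y => G y * fderiv ℝ f y w) x v =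
      G x * fderiv ℝ (fderiv ℝ f) x v w + fderiv ℝ G x v * fderiv ℝ f x w := by
  have hfw : DifferentiableAt ℝ (fun y => fderiv ℝ f y w) x :=
    hf.clm_apply (differentiableAt_const w)
  rw [fderiv_fun_mul hG hfw, fderiv_clm_apply hf (differentiableAt_const w)]
  simp only [fderiv_fun_const, Pi.zero_apply, ContinuousLinearMap.comp_zero, zero_add, add_apply,
    smul_apply, ContinuousLinearMap.flip_apply, smul_eq_mul]
  ring

theorem commutator_mul_fderiv (hG : DifferentiableAt ℝ G x) (hf : ContDiffAt ℝ 2 f x)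
    (v w : E) :
    G x * fderiv ℝ (fun y => G y * fderiv ℝ f y w) x v
        - G x * fderiv ℝ (fun y => G y * fderiv ℝ f y v) x w =
      G x * (fderiv ℝ G x v * fderiv ℝ f x w - fderiv ℝ G x w * fderiv ℝ f x v) := by
  have hf' : DifferentiableAt ℝ (fderiv ℝ f) x :=
    (hf.fderiv_right (m := 1) (by norm_num)).differentiableAt one_ne_zero
  rw [fderiv_mul_fderiv_apply hG hf', fderiv_mul_fderiv_apply hG hf',
    hf.isSymmSndFDerivAt (by simp) v w]
  ring

end ScaledFrame

section WeightedSumOfSquares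

variable {ι : Type*} [Fintype ι] [DecidableEq ι]

theorem fderiv_sum_mul_sq_apply_single (c x : ι → ℝ) (k : ι) :
    fderiv ℝ (fun z : ι → ℝ => ∑ i, c i * z i ^ 2) x (Pi.single k 1) = 2 * c k * x k := by
  rw [fderiv_fun_sum (fun i _ => by fun_prop)]
  have hterm (i : ι) :=
    (((hasFDerivAt_apply (𝕜 := ℝ) (F' := fun _ => ℝ) i x).pow 2).const_mul (c i)).fderiv
  simp only [hterm, Nat.add_one_sub_one, pow_one, nsmul_eq_mul, Nat.cast_ofNat, sum_apply,
    smul_apply, ContinuousLinearMap.proj_apply, Pi.single_apply, smul_eq_mul, mul_ite, mul_one,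
    mul_zero, Finset.sum_ite_eq', Finset.mem_univ, ↓reduceIte]
  ring

theorem fderiv_one_sub_sum_mul_sq_div_apply_single (c : ι → ℝ) (a : ℝ) (x : ι → ℝ)
    (k : ι) :
    fderiv ℝ (fun z : ι → ℝ => 1 - (∑ i, c i * z i ^ 2) / (4 * a)) x (Pi.single k 1) =
      -(c k * x k) / (2 * a) := by
  simp only [div_eq_mul_inv]
  rw [fderiv_const_sub, fderiv_mul_const (by fun_prop)]
  simp only [neg_apply, smul_apply, fderiv_sum_mul_sq_apply_single, smul_eq_mul]
  ring

end WeightedSumOfSquares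

theorem stmt_9_general (p q : ℕ) (R : ℝ) :
    let D := p + q
    let G : (Fin D → ℝ) → ℝ := fun x => 1 - (∑ μ : Fin D, eps p μ * (x μ) ^ 2) / (4 * R ^ 2)
    let pd : Fin D → ((Fin D → ℝ) → ℝ) → ((Fin D → ℝ) → ℝ) :=
      fun n f x => fderiv ℝ f x (Pi.single n 1)
    let e : Fin D → ((Fin D → ℝ) → ℝ) → ((Fin D → ℝ) → ℝ) :=
      fun n f x => G x * pd n f x
    ∀ f : (Fin D → ℝ) → ℝ, ContDiff ℝ 2 f →
      ∀ (n m : Fin D) (x : Fin D → ℝ),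
        e n (e m f) x - e m (e n f) x =
          -(1 / (2 * R ^ 2)) *
            ((eps p n * x n) * e m f x - (eps p m * x m) * e n f x) := by
  intro D G pd e f hf n m x
  have hG : DifferentiableAt ℝ G x := by fun_prop
  have hdG (k : Fin D) : fderiv ℝ G x (Pi.single k 1) = -(eps p k * x k) / (2 * R ^ 2) :=
    fderiv_one_sub_sum_mul_sq_div_apply_single (eps p) (R ^ 2) x k
  calc e n (e m f) x - e m (e n f) x
      = G x * (fderiv ℝ G x (Pi.single n 1) * pd m f x
          - fderiv ℝ G x (Pi.single m 1) * pd n f x) :=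
        commutator_mul_fderiv hG hf.contDiffAt _ _
    _ = _ := by rw [hdG, hdG]; ring

theorem stmt_9 (p q : ℕ) (R : ℝ) (hR : R ≠ 0) :
    let D := p + q
    let G : (Fin D → ℝ) → ℝ := fun x => 1 - (∑ μ : Fin D, eps p μ * (x μ) ^ 2) / (4 * R ^ 2)
    let pd : Fin D → ((Fin D → ℝ) → ℝ) → ((Fin D → ℝ) → ℝ) :=
      fun n f x => fderiv ℝ f x (Pi.single n 1)
    let e : Fin D → ((Fin D → ℝ) → ℝ) → ((Fin D → ℝ) → ℝ) :=
      fun n f x => G x * pd n f x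
    ∀ f : (Fin D → ℝ) → ℝ, ContDiff ℝ 2 f →
      ∀ (n m : Fin D) (x : Fin D → ℝ),
        e n (e m f) x - e m (e n f) x =
          -(1 / (2 * R ^ 2)) *
            ((eps p n * x n) * e m f x - (eps p m * x m) * e n f x) :=
  stmt_9_general p q R
end
end

section
/- Fix a real R ≠ 0, let G x = 1 − (Σ_μ ε μ * (x μ)²)/(4R²) and g μ ν x := (G x)⁻² * η μ ν. For each n : Fin D define the vector field φ⁽ⁿ⁾ μ x := (1 + (Σ_ρ ε ρ * (x ρ)²)/(4R²)) * (if μ = n then 1 else 0) − (1/(2R²)) * (ε n * x n) * x μ. Then each φ⁽ⁿ⁾ is a Killing vector field of g: for every x with G x ≠ 0 and all μ, ν : Fin D, Σ_γ φ⁽ⁿ⁾ γ x * ∂_γ (fun y => g μ ν y) x + Σ_γ g γ ν x * ∂_μ (fun y => φ⁽ⁿ⁾ γ y) x + Σ_γ g γ μ x * ∂_ν (fun y => φ⁽ⁿ⁾ γ y) x = 0. -/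
noncomputable section

/-! The metric is conformally flat, `g = G⁻² η`, so `∂_γ g_μν = η_μν ε_γ x_γ / (R² G³)`.
Contracting with `φ⁽ⁿ⁾` uses `∑_γ φ⁽ⁿ⁾_γ ε_γ x_γ = ε_n x_n G`, which turns the transport term into
`η_μν ε_n x_n / (R² G²)`. In the two terms with derivatives of `φ⁽ⁿ⁾` the contributions of
`∂(1 + Q/4R²)` cancel those of `∂(x_n x_μ)` with a `δ_n`, and what remains is
`-η_μν ε_n x_n / (R² G²)`. -/

namespace StereographicMetric

variable {ι : Type*} [Fintype ι] (e : ι → ℝ) (R : ℝ)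

def quadForm (x : ι → ℝ) : ℝ := ∑ ρ, e ρ * x ρ ^ 2

def conformalFactor (x : ι → ℝ) : ℝ := 1 - quadForm e x / (4 * R ^ 2)

@[fun_prop]
theorem differentiable_quadForm : Differentiable ℝ (quadForm e) := by
  unfold quadForm
  fun_prop

variable [DecidableEq ι]

def metric (μ ν : ι) (x : ι → ℝ) : ℝ := (conformalFactor e R x ^ 2)⁻¹ * if μ = ν then e μ else 0

def killingField (n μ : ι) (x : ι → ℝ) : ℝ :=
  (1 + quadForm e x / (4 * R ^ 2)) * (if μ = n then 1 else 0) - 1 / (2 * R ^ 2) * (e n * x n) * x μ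

theorem fderiv_quadForm_single (x : ι → ℝ) (γ : ι) :
    fderiv ℝ (quadForm e) x (Pi.single γ 1) = 2 * e γ * x γ := by
  have hQ : HasFDerivAt (quadForm e)
      (∑ ρ, (2 * e ρ * x ρ) • ContinuousLinearMap.proj (R := ℝ) (φ := fun _ : ι => ℝ) ρ) x := by
    refine HasFDerivAt.fun_sum fun ρ _ => ?_
    refine (((hasDerivAt_pow 2 (x ρ)).comp_hasFDerivAt x
      (hasFDerivAt_apply (𝕜 := ℝ) ρ x)).const_mul (e ρ)).congr_fderiv ?_
    ext v
    simp only [smul_apply, ContinuousLinearMap.proj_apply, smul_eq_mul]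
    ring
  simp [hQ.fderiv, Pi.single_apply]

theorem fderiv_inv_sq_conformalFactor_single {x : ι → ℝ} (hx : conformalFactor e R x ≠ 0)
    (γ : ι) :
    fderiv ℝ (fun y => (conformalFactor e R y ^ 2)⁻¹) x (Pi.single γ 1) =
      e γ * x γ / (R ^ 2 * conformalFactor e R x ^ 3) := by
  have hG := ((differentiable_quadForm e x).hasFDerivAt.mul_const (4 * R ^ 2)⁻¹).const_sub 1
  have hG2 : HasFDerivAt (fun y => (conformalFactor e R y ^ 2)⁻¹) _ x :=
    ((hasDerivAt_pow 2 (conformalFactor e R x)).inv (pow_ne_zero 2 hx)).comp_hasFDerivAt x hG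
  rw [hG2.fderiv]
  simp only [Nat.cast_ofNat, Nat.add_one_sub_one, pow_one, mul_inv_rev, smul_neg, neg_apply,
    smul_apply, fderiv_quadForm_single, smul_eq_mul]
  field_simp
  ring

theorem fderiv_metric_single {x : ι → ℝ} (hx : conformalFactor e R x ≠ 0) (μ ν γ : ι) :
    fderiv ℝ (metric e R μ ν) x (Pi.single γ 1) =
      (if μ = ν then e μ else 0) * (e γ * x γ) / (R ^ 2 * conformalFactor e R x ^ 3) := by
  have hd : DifferentiableAt ℝ (fun y => (conformalFactor e R y ^ 2)⁻¹) x := by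
    unfold conformalFactor
    fun_prop (disch := exact pow_ne_zero 2 hx)
  rw [show metric e R μ ν = fun y => (conformalFactor e R y ^ 2)⁻¹ * (if μ = ν then e μ else 0)
    from rfl, fderiv_mul_const hd, smul_apply, fderiv_inv_sq_conformalFactor_single e R hx]
  ring

theorem fderiv_killingField_single (x : ι → ℝ) (n γ m : ι) :
    fderiv ℝ (killingField e R n γ) x (Pi.single m 1) =
      (if γ = n then e m * x m / (2 * R ^ 2) else 0) -
        e n / (2 * R ^ 2) * ((if n = m then x γ else 0) + if γ = m then x n else 0) := by
  have hφ : HasFDerivAt (killingField e R n γ) _ x :=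
    ((((differentiable_quadForm e x).hasFDerivAt.mul_const (4 * R ^ 2)⁻¹).const_add 1).mul_const
      (if γ = n then (1 : ℝ) else 0)).sub
    ((((hasFDerivAt_apply (𝕜 := ℝ) n x).const_mul (e n)).const_mul (1 / (2 * R ^ 2))).mul
      (hasFDerivAt_apply (𝕜 := ℝ) γ x))
  rw [hφ.fderiv]
  simp only [sub_apply, add_apply, smul_apply, ContinuousLinearMap.proj_apply, smul_eq_mul,
    fderiv_quadForm_single, Pi.single_apply]
  split_ifs <;> subst_vars <;> first | contradiction | ring

theorem sum_killingField_mul_self (x : ι → ℝ) (n : ι) :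
    ∑ γ, killingField e R n γ x * (e γ * x γ) = e n * x n * conformalFactor e R x := by
  simp only [killingField, conformalFactor, sub_mul, Finset.sum_sub_distrib, mul_ite, ite_mul,
    mul_one, mul_zero, zero_mul, Finset.sum_ite_eq', Finset.mem_univ, if_true]
  have hQ : ∑ γ, 1 / (2 * R ^ 2) * (e n * x n) * x γ * (e γ * x γ) =
      1 / (2 * R ^ 2) * (e n * x n) * quadForm e x := by
    rw [quadForm, Finset.mul_sum]
    exact Finset.sum_congr rfl fun γ _ => by ring
  rw [hQ]
  ring

theorem sum_metric_mul (x : ι → ℝ) (ν : ι) (F : ι → ℝ) :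
    ∑ γ, metric e R γ ν x * F γ = (conformalFactor e R x ^ 2)⁻¹ * e ν * F ν := by
  simp [metric, mul_ite, ite_mul, Finset.sum_ite_eq', mul_assoc]

theorem killingField_killing_equation {x : ι → ℝ} (hx : conformalFactor e R x ≠ 0) (n μ ν : ι) :
    (∑ γ, killingField e R n γ x * fderiv ℝ (metric e R μ ν) x (Pi.single γ 1)) +
      (∑ γ, metric e R γ ν x * fderiv ℝ (killingField e R n γ) x (Pi.single μ 1)) +
      (∑ γ, metric e R γ μ x * fderiv ℝ (killingField e R n γ) x (Pi.single ν 1)) = 0 := by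
  have transport : ∑ γ, killingField e R n γ x * fderiv ℝ (metric e R μ ν) x (Pi.single γ 1) =
      (if μ = ν then e μ else 0) * (e n * x n) / (R ^ 2 * conformalFactor e R x ^ 2) := by
    calc _ = (∑ γ, killingField e R n γ x * (e γ * x γ)) *
          ((if μ = ν then e μ else 0) / (R ^ 2 * conformalFactor e R x ^ 3)) := by
          rw [Finset.sum_mul]
          refine Finset.sum_congr rfl fun γ _ => ?_
          rw [fderiv_metric_single e R hx]
          ring
      _ = _ := by
          rw [sum_killingField_mul_self]
          field_simp
  rw [transport, sum_metric_mul, sum_metric_mul, fderiv_killingField_single,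
    fderiv_killingField_single]
  split_ifs <;> subst_vars <;> first | contradiction | (field_simp; ring)

end StereographicMetric

theorem stmt_12_general (p q : ℕ) (R : ℝ) :
    let D := p + q
    let G : (Fin D → ℝ) → ℝ := fun x => 1 - (∑ μ : Fin D, eps p μ * (x μ) ^ 2) / (4 * R ^ 2)
    let pd : Fin D → ((Fin D → ℝ) → ℝ) → ((Fin D → ℝ) → ℝ) :=
      fun n f x => fderiv ℝ f x (Pi.single n 1)
    let g : Fin D → Fin D → (Fin D → ℝ) → ℝ :=
      fun μ ν x => ((G x) ^ 2)⁻¹ * eta p μ ν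
    let φ : Fin D → Fin D → (Fin D → ℝ) → ℝ :=
      fun n μ x => (1 + (∑ ρ : Fin D, eps p ρ * (x ρ) ^ 2) / (4 * R ^ 2)) *
          (if μ = n then (1 : ℝ) else 0) - (1 / (2 * R ^ 2)) * (eps p n * x n) * x μ
    ∀ (n : Fin D) (x : Fin D → ℝ), G x ≠ 0 → ∀ μ ν : Fin D,
      (∑ γ : Fin D, φ n γ x * pd γ (fun y => g μ ν y) x) +
        (∑ γ : Fin D, g γ ν x * pd μ (fun y => φ n γ y) x) +
        (∑ γ : Fin D, g γ μ x * pd ν (fun y => φ n γ y) x) = 0 := by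
  intro D G pd g φ n x hx μ ν
  exact StereographicMetric.killingField_killing_equation (eps p) R hx n μ ν

theorem stmt_12 (p q : ℕ) (R : ℝ) (hR : R ≠ 0) :
    let D := p + q
    let G : (Fin D → ℝ) → ℝ := fun x => 1 - (∑ μ : Fin D, eps p μ * (x μ) ^ 2) / (4 * R ^ 2)
    let pd : Fin D → ((Fin D → ℝ) → ℝ) → ((Fin D → ℝ) → ℝ) :=
      fun n f x => fderiv ℝ f x (Pi.single n 1)
    let g : Fin D → Fin D → (Fin D → ℝ) → ℝ :=
      fun μ ν x => ((G x) ^ 2)⁻¹ * eta p μ ν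
    let φ : Fin D → Fin D → (Fin D → ℝ) → ℝ :=
      fun n μ x => (1 + (∑ ρ : Fin D, eps p ρ * (x ρ) ^ 2) / (4 * R ^ 2)) *
          (if μ = n then (1 : ℝ) else 0) - (1 / (2 * R ^ 2)) * (eps p n * x n) * x μ
    ∀ (n : Fin D) (x : Fin D → ℝ), G x ≠ 0 → ∀ μ ν : Fin D,
      (∑ γ : Fin D, φ n γ x * pd γ (fun y => g μ ν y) x) +
        (∑ γ : Fin D, g γ ν x * pd μ (fun y => φ n γ y) x) +
        (∑ γ : Fin D, g γ μ x * pd ν (fun y => φ n γ y) x) = 0 :=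
  stmt_12_general p q R
end
end

section
/- Fix a real R ≠ 0. In Module.End ℝ (MvPolynomial ℝ (Fin D)), let X_m denote multiplication by the m-th variable, ∂_m := pderiv m, 𝔞 := Σ_μ ε μ • (X_μ)² (a polynomial), E := Σ_μ X_μ ∘ ∂_μ the Euler operator, and define P n := (multiplication by (1 + 𝔞/(4R²))) ∘ ∂_n − (ε n/(2R²)) • (X_n ∘ E) and L m n := ε m • (X_m ∘ ∂_n) − ε n • (X_n ∘ ∂_m). Then these operators realize the so(p+1,q) algebra: (i) L m n = −L n m and ⁅L m n, L k l⁆ = η n k • L m l + η m l • L n k − η n l • L m k − η m k • L n l; (ii) ⁅L m n, P l⁆ = η n l • P m − η m l • P n; (iii) ⁅P n, P m⁆ = (1/R²) • L n m, where ⁅a,b⁆ = a∘b − b∘a. -/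
/-!
Only the canonical commutation relations `⁅∂ᵢ, xⱼ⁆ = δᵢⱼ`, `⁅xᵢ, xⱼ⁆ = ⁅∂ᵢ, ∂ⱼ⁆ = 0` enter, so the
identities hold for any such family in an associative algebra, for arbitrary signs `ε` and any
constant `c` in place of `1/(4R²)`. The operators `xₐ ∂_b` satisfy the `gl` relations, which give
the `so(p,q)` relations of `L`. Each `L` preserves degree and the quadric `𝔞`, so it commutes with
`E` and with `1 + c𝔞`, which gives `⁅L, P⁆`. In `⁅P_n, P_m⁆` the `∂∂`-terms contribute
`2c (1 + c𝔞) L_nm` and the cross terms with `x E` contribute `2c (1 - c𝔞) L_nm`, adding up to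
`4c L_nm = L_nm / R²`.
-/

noncomputable section

open MvPolynomial

section Commutator

variable {A : Type*} [Ring A]

theorem Ring.lie_mul (a b c : A) : ⁅a, b * c⁆ = ⁅a, b⁆ * c + b * ⁅a, c⁆ := by
  simp only [Ring.lie_def, sub_mul, mul_sub, mul_assoc]; abel

theorem Ring.mul_lie (a b c : A) : ⁅a * b, c⁆ = a * ⁅b, c⁆ + ⁅a, c⁆ * b := by
  simp only [Ring.lie_def, sub_mul, mul_sub, mul_assoc]; abel

end Commutator

structure WeylRelations {ι A : Type*} [DecidableEq ι] [Ring A] (x d : ι → A) : Prop where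
  lie_x_x (i j : ι) : ⁅x i, x j⁆ = 0
  lie_d_d (i j : ι) : ⁅d i, d j⁆ = 0
  lie_d_x (i j : ι) : ⁅d i, x j⁆ = if i = j then 1 else 0

namespace Weyl

variable {ι K A : Type*} [CommRing K] [Ring A] [Algebra K A]

def angMom (ε : ι → K) (x d : ι → A) (m n : ι) : A :=
  ε m • (x m * d n) - ε n • (x n * d m)

theorem angMom_antisymm (ε : ι → K) (x d : ι → A) (m n : ι) :
    angMom ε x d m n = -angMom ε x d n m :=
  (neg_sub _ _).symm

variable [Fintype ι]

def euler (x d : ι → A) : A := ∑ i, x i * d i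

def quadric (ε : ι → K) (x : ι → A) : A := ∑ i, ε i • x i ^ 2

def conformalFactor (ε : ι → K) (x : ι → A) (c : K) : A := 1 + c • quadric ε x

def momentum (ε : ι → K) (x d : ι → A) (c : K) (n : ι) : A :=
  conformalFactor ε x c * d n - (2 * c * ε n) • (x n * euler x d)

end Weyl

namespace WeylRelations

open Weyl

attribute [local instance 100] LieRing.ofAssociativeRing

variable {ι K A : Type*} [DecidableEq ι] [CommRing K] [Ring A] [Algebra K A]
  {ε : ι → K} {x d : ι → A} (h : WeylRelations x d)
include h

theorem lie_x_d (i j : ι) : ⁅x i, d j⁆ = if i = j then -1 else 0 := by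
  rw [← lie_skew, h.lie_d_x, neg_ite, neg_zero]
  simp_rw [eq_comm (a := j)]

theorem commute_x (i j : ι) : Commute (x i) (x j) :=
  commute_iff_lie_eq.mpr (h.lie_x_x i j)

theorem lie_x_mul_d_x (a b c : ι) : ⁅x a * d b, x c⁆ = if b = c then x a else 0 := by
  simp [Ring.mul_lie, h.lie_d_x, h.lie_x_x, mul_ite]

theorem lie_x_mul_d_d (a b c : ι) : ⁅x a * d b, d c⁆ = -if a = c then d b else 0 := by
  simp [Ring.mul_lie, h.lie_d_d, h.lie_x_d, ite_mul, neg_ite]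

theorem lie_x_mul_d_x_mul_d (a b c e : ι) :
    ⁅x a * d b, x c * d e⁆ =
      (if b = c then x a * d e else 0) - if a = e then x c * d b else 0 := by
  rw [Ring.lie_mul, h.lie_x_mul_d_x, h.lie_x_mul_d_d]
  simp [ite_mul, mul_ite, sub_eq_add_neg]

theorem lie_angMom_angMom (m n k l : ι) :
    ⁅angMom ε x d m n, angMom ε x d k l⁆ =
      (if n = k then ε n else 0) • angMom ε x d m l
        + (if m = l then ε m else 0) • angMom ε x d n k
        - (if n = l then ε n else 0) • angMom ε x d m k
        - (if m = k then ε m else 0) • angMom ε x d n l := by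
  simp only [angMom, sub_lie, lie_sub, smul_lie, LieAlgebra.lie_smul, h.lie_x_mul_d_x_mul_d,
    smul_sub, smul_smul]
  split_ifs <;> subst_vars <;> module

theorem lie_angMom_x (m n l : ι) :
    ⁅angMom ε x d m n, x l⁆ =
      (if n = l then ε m • x m else 0) - if m = l then ε n • x n else 0 := by
  simp [angMom, sub_lie, smul_lie, h.lie_x_mul_d_x, smul_ite]

theorem lie_angMom_d (m n l : ι) :
    ⁅angMom ε x d m n, d l⁆ =
      (if n = l then ε n • d m else 0) - if m = l then ε m • d n else 0 := by
  simp only [angMom, sub_lie, smul_lie, h.lie_x_mul_d_d, smul_neg, smul_ite, smul_zero]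
  abel

variable [Fintype ι]

theorem lie_x_mul_d_euler (a b : ι) : ⁅x a * d b, euler x d⁆ = 0 := by
  simp [euler, lie_sum, h.lie_x_mul_d_x_mul_d, Finset.sum_sub_distrib]

theorem lie_x_mul_d_quadric (a b : ι) :
    ⁅x a * d b, quadric ε x⁆ = (2 * ε b) • (x a * x b) := by
  simp only [quadric, lie_sum, LieAlgebra.lie_smul, pow_two, Ring.lie_mul, h.lie_x_mul_d_x,
    ite_mul, mul_ite, zero_mul, mul_zero, ← ite_add_zero, smul_ite, smul_zero, Finset.sum_ite_eq,
    Finset.mem_univ, if_true, (h.commute_x b a).eq]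
  module

theorem lie_d_euler (n : ι) : ⁅d n, euler x d⁆ = d n := by
  simp [euler, lie_sum, Ring.lie_mul, h.lie_d_x, h.lie_d_d, ite_mul]

theorem lie_euler_x (m : ι) : ⁅euler x d, x m⁆ = x m := by
  simp [euler, sum_lie, h.lie_x_mul_d_x]

theorem lie_d_quadric (n : ι) : ⁅d n, quadric ε x⁆ = (2 * ε n) • x n := by
  simp only [quadric, lie_sum, LieAlgebra.lie_smul, pow_two, Ring.lie_mul, h.lie_d_x, ite_mul,
    mul_ite, one_mul, mul_one, zero_mul, mul_zero, ← ite_add_zero, smul_ite, smul_zero,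
    Finset.sum_ite_eq, Finset.mem_univ, if_true]
  module

theorem commute_x_quadric (m : ι) : Commute (x m) (quadric ε x) :=
  commute_iff_lie_eq.mpr <| by
    simp [quadric, lie_sum, LieAlgebra.lie_smul, pow_two, Ring.lie_mul, h.lie_x_x]

theorem lie_euler_quadric : ⁅euler x d, quadric ε x⁆ = (2 : K) • quadric ε x := by
  simp only [euler, sum_lie, h.lie_x_mul_d_quadric]
  simp only [quadric, Finset.smul_sum, pow_two]
  refine Finset.sum_congr rfl fun i _ => ?_
  module

theorem lie_angMom_euler (m n : ι) : ⁅angMom ε x d m n, euler x d⁆ = 0 := by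
  simp [angMom, sub_lie, smul_lie, h.lie_x_mul_d_euler]

theorem lie_angMom_quadric (m n : ι) : ⁅angMom ε x d m n, quadric ε x⁆ = 0 := by
  simp only [angMom, sub_lie, smul_lie, h.lie_x_mul_d_quadric, smul_smul, (h.commute_x n m).eq]
  module

theorem lie_conformalFactor_d (c : K) (n : ι) :
    ⁅conformalFactor ε x c, d n⁆ = -((2 * c * ε n) • x n) := by
  rw [conformalFactor, add_lie, (Commute.one_left _).lie_eq, smul_lie, ← lie_skew _ (d n),
    h.lie_d_quadric, zero_add, smul_neg, smul_smul, mul_left_comm, ← mul_assoc]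

theorem commute_x_conformalFactor (c : K) (m : ι) : Commute (x m) (conformalFactor ε x c) :=
  (Commute.one_right _).add_right ((h.commute_x_quadric m).smul_right c)

theorem lie_conformalFactor_euler (c : K) :
    ⁅conformalFactor ε x c, euler x d⁆ = -((2 * c) • quadric ε x) := by
  rw [conformalFactor, add_lie, (Commute.one_left _).lie_eq, smul_lie, ← lie_skew _ (euler x d),
    h.lie_euler_quadric, zero_add, smul_neg, smul_smul, mul_comm]

theorem lie_angMom_conformalFactor (c : K) (m n : ι) :
    ⁅angMom ε x d m n, conformalFactor ε x c⁆ = 0 := by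
  rw [conformalFactor, lie_add, ((Commute.one_left _).symm).lie_eq, LieAlgebra.lie_smul,
    h.lie_angMom_quadric, smul_zero, add_zero]

theorem lie_angMom_momentum (c : K) (m n l : ι) :
    ⁅angMom ε x d m n, momentum ε x d c l⁆ =
      (if n = l then ε n else 0) • momentum ε x d c m
        - (if m = l then ε m else 0) • momentum ε x d c n := by
  simp only [momentum, lie_sub, LieAlgebra.lie_smul, Ring.lie_mul, h.lie_angMom_conformalFactor,
    h.lie_angMom_euler, h.lie_angMom_d, h.lie_angMom_x, zero_mul, zero_add, mul_zero, add_zero,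
    mul_sub, sub_mul, mul_ite, ite_mul, mul_smul_comm, smul_mul_assoc]
  split_ifs <;> subst_vars <;> module

theorem lie_conformalFactor_mul_d_conformalFactor_mul_d (c : K) (n m : ι) :
    ⁅conformalFactor ε x c * d n, conformalFactor ε x c * d m⁆ =
      (2 * c) • (conformalFactor ε x c * angMom ε x d n m) := by
  rw [Ring.lie_mul, Ring.mul_lie, Ring.mul_lie, ← lie_skew (d n), h.lie_conformalFactor_d,
    lie_self, h.lie_d_d, h.lie_conformalFactor_d, angMom]
  simp only [neg_neg, zero_mul, add_zero, mul_zero, zero_add, smul_mul_assoc, mul_smul_comm,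
    mul_sub, smul_sub, smul_smul, mul_assoc, neg_mul, mul_neg]
  module

theorem lie_conformalFactor_mul_d_x_mul_euler (c : K) (n m : ι) :
    ⁅conformalFactor ε x c * d n, x m * euler x d⁆ =
      (if n = m then conformalFactor ε x c * euler x d else 0)
        + (1 - c • quadric ε x) * (x m * d n) := by
  rw [Ring.lie_mul, Ring.mul_lie, Ring.mul_lie, h.lie_d_x, ← lie_skew _ (x m),
    (h.commute_x_conformalFactor c m).lie_eq, h.lie_d_euler, h.lie_conformalFactor_euler]
  simp only [mul_ite, ite_mul, mul_one, mul_zero, zero_mul, neg_zero, add_zero, mul_add, neg_mul,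
    mul_neg, smul_mul_assoc, mul_smul_comm, (h.commute_x_quadric m).left_comm, sub_mul, one_mul,
    conformalFactor, add_mul]
  module

theorem lie_x_mul_euler_x_mul_euler (n m : ι) : ⁅x n * euler x d, x m * euler x d⁆ = 0 := by
  rw [Ring.lie_mul, Ring.mul_lie, Ring.mul_lie, h.lie_euler_x, h.lie_x_x, lie_self,
    ← lie_skew (x n), h.lie_euler_x, (h.commute_x n m).eq]
  simp [mul_assoc]

theorem lie_momentum_momentum (c : K) (n m : ι) :
    ⁅momentum ε x d c n, momentum ε x d c m⁆ = (4 * c) • angMom ε x d n m := by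
  rw [momentum, momentum, lie_sub, sub_lie, sub_lie, LieAlgebra.lie_smul, smul_lie, smul_lie,
    LieAlgebra.lie_smul, ← lie_skew (x n * euler x d),
    h.lie_conformalFactor_mul_d_conformalFactor_mul_d, h.lie_conformalFactor_mul_d_x_mul_euler,
    h.lie_conformalFactor_mul_d_x_mul_euler, h.lie_x_mul_euler_x_mul_euler]
  simp only [angMom, conformalFactor, smul_zero, sub_zero, smul_neg, smul_add, smul_sub, mul_sub,
    add_mul, sub_mul, one_mul, smul_mul_assoc, mul_smul_comm, smul_ite, smul_smul, @eq_comm _ m n]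
  split_ifs <;> subst_vars <;> module

end WeylRelations

namespace MvPolynomial

variable {σ R : Type*} [CommRing R]

theorem weylRelations_mulLeft_X_pderiv [DecidableEq σ] :
    WeylRelations (fun i : σ => LinearMap.mulLeft R (X i : MvPolynomial σ R))
      (fun i => (pderiv i).toLinearMap) where
  lie_x_x i j := LinearMap.ext fun f => by
    simp [Ring.lie_def, mul_left_comm]
  lie_d_d i j := by
    rw [← Derivation.commutator_coe_linear_map, ← Derivation.coe_zero_linearMap]
    congr 1
    refine derivation_ext fun k => ?_
    simp [Derivation.commutator_apply, Pi.single_apply, apply_ite]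
  lie_d_x i j := LinearMap.ext fun f => by
    simp only [Ring.lie_def, LinearMap.sub_apply, Module.End.mul_apply, LinearMap.mulLeft_apply,
      Derivation.coeFn_coe, pderiv_mul, pderiv_X, Pi.single_apply, eq_comm (a := j)]
    split_ifs <;> simp

theorem mulLeft_eq_conformalFactor [Fintype σ] (ε : σ → R) (c : R) :
    LinearMap.mulLeft R (1 + c • ∑ i, ε i • X i ^ 2 : MvPolynomial σ R) =
      Weyl.conformalFactor ε (fun i => LinearMap.mulLeft R (X i : MvPolynomial σ R)) c := by
  change Algebra.lmul R _ _ = _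
  simp only [map_add, map_one, map_smul, map_sum, map_pow]
  rfl

end MvPolynomial

theorem stmt_13_general (p q : ℕ) (R : ℝ) :
    let D := p + q
    let Xop : Fin D → Module.End ℝ (MvPolynomial (Fin D) ℝ) :=
      fun m => LinearMap.mulLeft ℝ (X m)
    let pd : Fin D → Module.End ℝ (MvPolynomial (Fin D) ℝ) :=
      fun m => (pderiv m).toLinearMap
    let 𝔞 : MvPolynomial (Fin D) ℝ := ∑ μ : Fin D, eps p μ • (X μ ^ 2)
    let E : Module.End ℝ (MvPolynomial (Fin D) ℝ) := ∑ μ : Fin D, Xop μ * pd μ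
    let P : Fin D → Module.End ℝ (MvPolynomial (Fin D) ℝ) :=
      fun n => LinearMap.mulLeft ℝ (1 + (1 / (4 * R ^ 2)) • 𝔞) * pd n
        - (eps p n / (2 * R ^ 2)) • (Xop n * E)
    let L : Fin D → Fin D → Module.End ℝ (MvPolynomial (Fin D) ℝ) :=
      fun m n => eps p m • (Xop m * pd n) - eps p n • (Xop n * pd m)
    ((∀ m n, L m n = - L n m) ∧
      (∀ m n k l, ⁅L m n, L k l⁆ =
        eta p n k • L m l + eta p m l • L n k - eta p n l • L m k - eta p m k • L n l)) ∧
    (∀ m n l, ⁅L m n, P l⁆ = eta p n l • P m - eta p m l • P n) ∧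
    (∀ n m, ⁅P n, P m⁆ = (1 / R ^ 2) • L n m) := by
  intro D Xop pd 𝔞 E P L
  have h : WeylRelations Xop pd := weylRelations_mulLeft_X_pderiv
  have hP : P = Weyl.momentum (eps p : Fin D → ℝ) Xop pd (1 / (4 * R ^ 2)) := by
    funext n
    have hc : eps p n / (2 * R ^ 2) = 2 * (1 / (4 * R ^ 2)) * eps p n := by ring
    simp only [P, 𝔞, E, Weyl.momentum, mulLeft_eq_conformalFactor, hc]
    rfl
  have hL : L = Weyl.angMom (eps p : Fin D → ℝ) Xop pd := rfl
  rw [hP, hL]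
  refine ⟨⟨Weyl.angMom_antisymm _ _ _, h.lie_angMom_angMom⟩, h.lie_angMom_momentum _,
    fun n m => ?_⟩
  rw [h.lie_momentum_momentum]
  congr 1
  ring

theorem stmt_13 (p q : ℕ) (R : ℝ) (hR : R ≠ 0) :
    let D := p + q
    let Xop : Fin D → Module.End ℝ (MvPolynomial (Fin D) ℝ) :=
      fun m => LinearMap.mulLeft ℝ (X m)
    let pd : Fin D → Module.End ℝ (MvPolynomial (Fin D) ℝ) :=
      fun m => (pderiv m).toLinearMap
    let 𝔞 : MvPolynomial (Fin D) ℝ := ∑ μ : Fin D, eps p μ • (X μ ^ 2)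
    let E : Module.End ℝ (MvPolynomial (Fin D) ℝ) := ∑ μ : Fin D, Xop μ * pd μ
    let P : Fin D → Module.End ℝ (MvPolynomial (Fin D) ℝ) :=
      fun n => LinearMap.mulLeft ℝ (1 + (1 / (4 * R ^ 2)) • 𝔞) * pd n
        - (eps p n / (2 * R ^ 2)) • (Xop n * E)
    let L : Fin D → Fin D → Module.End ℝ (MvPolynomial (Fin D) ℝ) :=
      fun m n => eps p m • (Xop m * pd n) - eps p n • (Xop n * pd m)
    ((∀ m n, L m n = - L n m) ∧
      (∀ m n k l, ⁅L m n, L k l⁆ =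
        eta p n k • L m l + eta p m l • L n k - eta p n l • L m k - eta p m k • L n l)) ∧
    (∀ m n l, ⁅L m n, P l⁆ = eta p n l • P m - eta p m l • P n) ∧
    (∀ n m, ⁅P n, P m⁆ = (1 / R ^ 2) • L n m) :=
  stmt_13_general p q R
end
end

section
/- Work in the commutative polynomial ring ℝ[N, 𝐍] in two indeterminates. Fix real numbers μ, e, R with R ≠ 0, and real parameters a, b, c, d. Define Δ := C(e − μ) + C(b)·N + C(c)·N² + C(d)·𝐍 (C denotes the constant embedding ℝ → ℝ[N,𝐍]), Δ̌ := C(e − μ) + C(b)·(N − 2) + C(c)·(N − 2)² + C(d)·(𝐍 − 2·(N − 1)), Δ̂ := C(e − μ) + C(b)·(N + 2) + C(c)·(N + 2)² + C(d)·(𝐍 + 2·(N + 1)), and Δ₀ := C(a) + C(1/R²)·(4·N + N²/4 + 𝐍/2). Then the closure identity (N + 4)·Δ₀ + (Δ̌ − Δ̂)·Δ = 0 holds in ℝ[N, 𝐍] if and only if there exists σ ∈ ({1, −1} : Set ℝ) such that a = 2σ(e − μ)/R, b = 2σ/R, c = σ/(8R), and d = σ/(4R). -/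
/-!
Since `Δ̌ - Δ̂ = -(4b + (8c + 4d) N)`, the closure expression is a polynomial supported on the
monomials `1, N, N², N³, 𝐍, N𝐍`, so it vanishes iff its six coefficients do. Two of them force
`b = 8c + 4d`, and then the others give `b² = 4/R²`, `c = b/16`, `d = b/8` and `a = b (e - μ)`;
the sign `σ = bR/2` parametrises the two solutions.
-/

open MvPolynomial

theorem C_add_C_mul_X_zero_add_X_one_eq_zero_iff {K : Type*} [CommSemiring K]
    (p₀ p₁ p₂ p₃ q₀ q₁ : K) :
    (C p₀ + C p₁ * X 0 + C p₂ * X 0 ^ 2 + C p₃ * X 0 ^ 3 + C q₀ * X 1 + C q₁ * (X 0 * X 1) :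
        MvPolynomial (Fin 2) K) = 0 ↔
      p₀ = 0 ∧ p₁ = 0 ∧ p₂ = 0 ∧ p₃ = 0 ∧ q₀ = 0 ∧ q₁ = 0 := by
  refine ⟨fun h => ?_, fun ⟨h₀, h₁, h₂, h₃, h₄, h₅⟩ => by simp [h₀, h₁, h₂, h₃, h₄, h₅]⟩
  have hc (i j : ℕ) := congrArg (coeff (Finsupp.single 0 i + Finsupp.single 1 j)) h
  simp only [coeff_add, coeff_C_mul, coeff_C, coeff_X, coeff_X_pow, coeff_mul_X', coeff_zero,
    Finsupp.ext_iff, Fin.forall_fin_two, Finsupp.add_apply, Finsupp.single_apply,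
    Finsupp.mem_support_iff] at hc
  exact ⟨by simpa using hc 0 0, by simpa using hc 1 0, by simpa using hc 2 0,
    by simpa using hc 3 0, by simpa using hc 0 1, by simpa using hc 1 1⟩

theorem closure_expand (k ε a b c d : ℝ) :
    (X 0 + 4 : MvPolynomial (Fin 2) ℝ) *
          (C a + C k * (4 * X 0 + C (1 / 4) * X 0 ^ 2 + C (1 / 2) * X 1)) +
        ((C ε + C b * (X 0 - 2) + C c * (X 0 - 2) ^ 2 + C d * (X 1 - 2 * (X 0 - 1))) -
          (C ε + C b * (X 0 + 2) + C c * (X 0 + 2) ^ 2 + C d * (X 1 + 2 * (X 0 + 1)))) *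
        (C ε + C b * X 0 + C c * X 0 ^ 2 + C d * X 1) =
      C (4 * (a - b * ε)) + C (a + 16 * k - 4 * b ^ 2 - (8 * c + 4 * d) * ε) * X 0 +
        C (5 * k - 4 * b * c - (8 * c + 4 * d) * b) * X 0 ^ 2 +
        C (k / 4 - (8 * c + 4 * d) * c) * X 0 ^ 3 + C (2 * k - 4 * b * d) * X 1 +
        C (k / 2 - (8 * c + 4 * d) * d) * (X 0 * X 1) := by
  apply MvPolynomial.funext
  intro x
  simp only [map_add, map_mul, map_sub, map_pow, eval_C, eval_X, map_ofNat]
  ring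

theorem closure_coeffs_iff {k a b c d ε : ℝ} (hk : k ≠ 0) :
    (4 * (a - b * ε) = 0 ∧ a + 16 * k - 4 * b ^ 2 - (8 * c + 4 * d) * ε = 0 ∧
        5 * k - 4 * b * c - (8 * c + 4 * d) * b = 0 ∧ k / 4 - (8 * c + 4 * d) * c = 0 ∧
        2 * k - 4 * b * d = 0 ∧ k / 2 - (8 * c + 4 * d) * d = 0) ↔
      a = b * ε ∧ b ^ 2 = 4 * k ∧ 16 * c = b ∧ 8 * d = b := by
  constructor
  · rintro ⟨h₀, -, -, h₃, h₄, h₅⟩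
    have hd : d ≠ 0 := by rintro rfl; exact hk (by linear_combination h₄ / 2)
    have hb : b = 8 * c + 4 * d :=
      sub_eq_zero.mp (mul_left_cancel₀ hd (by linear_combination h₅ - h₄ / 4))
    have hbb : b ^ 2 = 4 * k := by rw [hb]; linear_combination -8 * h₃ - 4 * h₅
    have hb0 : b ≠ 0 := by rintro rfl; exact hk (by linear_combination -hbb / 4)
    have hc : 16 * c = b :=
      sub_eq_zero.mp (mul_left_cancel₀ hb0 (by
      linear_combination (8 * c - 4 * d - b) * hb + 4 * h₅ - 8 * h₃))
    exact ⟨by linear_combination h₀ / 4, hbb, hc, by linear_combination -2 * hb - hc⟩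
  · rintro ⟨rfl, hbb, hc, hd⟩
    obtain rfl : c = b / 16 := by linear_combination hc / 16
    obtain rfl : d = b / 8 := by linear_combination hd / 8
    refine ⟨by ring, ?_, ?_, ?_, ?_, ?_⟩
    · linear_combination -4 * hbb
    · linear_combination -5 / 4 * hbb
    · linear_combination -1 / 16 * hbb
    · linear_combination -1 / 2 * hbb
    · linear_combination -1 / 8 * hbb

theorem exists_sign_iff {R ε a b c d : ℝ} (hR : R ≠ 0) :
    (∃ σ ∈ ({1, -1} : Set ℝ), a = 2 * σ * ε / R ∧ b = 2 * σ / R ∧ c = σ / (8 * R) ∧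
        d = σ / (4 * R)) ↔
      a = b * ε ∧ b ^ 2 = 4 * (1 / R ^ 2) ∧ 16 * c = b ∧ 8 * d = b := by
  constructor
  · rintro ⟨σ, hσ, rfl, rfl, rfl, rfl⟩
    have hσ2 : σ ^ 2 = 1 := by rcases hσ with rfl | rfl <;> norm_num
    refine ⟨by ring, ?_, by field_simp; ring, by field_simp; ring⟩
    field_simp
    linear_combination 4 * hσ2
  · rintro ⟨rfl, hbb, hc, hd⟩
    refine ⟨b * R / 2, ?_, ?_, ?_, ?_, ?_⟩
    · have hσ2 : (b * R / 2) ^ 2 = 1 := by field_simp at hbb; linear_combination hbb / 4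
      exact sq_eq_one_iff.mp hσ2
    · field_simp
    · field_simp
    · field_simp; linear_combination hc
    · field_simp; linear_combination hd

theorem stmt_18 (μ e R a b c d : ℝ) (hR : R ≠ 0) :
    let Np : MvPolynomial (Fin 2) ℝ := X 0
    let NN : MvPolynomial (Fin 2) ℝ := X 1
    let Cc : ℝ → MvPolynomial (Fin 2) ℝ := fun r => C r
    let Δ : MvPolynomial (Fin 2) ℝ :=
      Cc (e - μ) + Cc b * Np + Cc c * Np ^ 2 + Cc d * NN
    let Δcheck : MvPolynomial (Fin 2) ℝ :=
      Cc (e - μ) + Cc b * (Np - 2) + Cc c * (Np - 2) ^ 2 + Cc d * (NN - 2 * (Np - 1))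
    let Δhat : MvPolynomial (Fin 2) ℝ :=
      Cc (e - μ) + Cc b * (Np + 2) + Cc c * (Np + 2) ^ 2 + Cc d * (NN + 2 * (Np + 1))
    let Δ0 : MvPolynomial (Fin 2) ℝ :=
      Cc a + Cc (1 / R ^ 2) * (4 * Np + Cc (1 / 4) * Np ^ 2 + Cc (1 / 2) * NN)
    ((Np + 4) * Δ0 + (Δcheck - Δhat) * Δ = 0 ↔
      ∃ σ ∈ ({1, -1} : Set ℝ), a = 2 * σ * (e - μ) / R ∧ b = 2 * σ / R ∧
        c = σ / (8 * R) ∧ d = σ / (4 * R)) := by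
  dsimp only
  rw [closure_expand, C_add_C_mul_X_zero_add_X_one_eq_zero_iff,
    closure_coeffs_iff (by positivity), exists_sign_iff hR]
end
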